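/- arXiv:2411.17494 — 3 statements merged into one kernel-verified Lean document; each statement's English description precedes it below -/
import Mathlib

section
/- Let f ∈ K[s,t] be a nonzero homogeneous polynomial of degree d. Suppose g₁, g₂ ∈ K[s,t] are homogeneous of degrees d₁ and d₂ respectively, with 2 ≤ d₁ ≤ d₂ and d₁ + d₂ = d + 2, that g₁ and g₂ have no common zero in K² other than (0,0), and that the apolar ideal {G ∈ K[s,t] : G∘f = 0} equals the ideal generated by g₁ and g₂. Then the d polynomials g₂·s^{d₁−2−i}t^i for 0 ≤ i ≤ d₁−2 together with g₁·s^{d₂−2−j}t^j for 0 ≤ j ≤ d₂−2 form a K-basis of the vector space W_f = {G ∈ K[s,t] homogeneous of degree d : G∘f = 0}. -/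
/-!
Because `g₁` and `g₂` have no common nontrivial zero, they are coprime: by the Nullstellensatz
a polynomial vanishing only at the origin divides a power of each variable, so a common divisor
of `g₁` and `g₂` is a unit. Taking homogeneous components,
the degree-`d` part of the ideal `(g₁, g₂)` is `g₁ · S_{d₂-2} + g₂ · S_{d₁-2}`, where `S_n` is
spanned by the monomials of degree `n`. The sum is direct: `g₂ P ∈ (g₁)` forces `g₁ ∣ P`,
which is impossible for a nonzero `P` of degree `d₁ - 2 < d₁`.
-/

open MvPolynomial

/-- The apolarity action `G ∘ f = G(∂/∂s, ∂/∂t) f` for bivariate polynomials. -/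
noncomputable def apolar {K : Type*} [CommSemiring K] (G f : MvPolynomial (Fin 2) K) :
    MvPolynomial (Fin 2) K :=
  ∑ a ∈ G.support, G.coeff a • ((⇑(pderiv (0 : Fin 2)))^[a 0] ((⇑(pderiv (1 : Fin 2)))^[a 1] f))

namespace MvPolynomial

section Homogeneous

variable {σ R : Type*} [CommSemiring R]

theorem IsHomogeneous.not_isUnit [Nontrivial R] {p : MvPolynomial σ R} {n : ℕ}
    (hp : p.IsHomogeneous n) (hn : n ≠ 0) : ¬IsUnit p := fun hu =>
  (hu.map constantCoeff).ne_zero (hp.coeff_eq_zero (by simpa using hn.symm))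

attribute [local instance] gradedAlgebra in
theorem IsHomogeneous.homogeneousComponent_mul {g : MvPolynomial σ R} {m n : ℕ}
    (hg : g.IsHomogeneous m) (a : MvPolynomial σ R) (hmn : m ≤ n) :
    homogeneousComponent n (g * a) = g * homogeneousComponent (n - m) a := by
  have := DirectSum.coe_decompose_mul_of_left_mem (homogeneousSubmodule σ R) (b := a) n
    ((mem_homogeneousSubmodule m g).mpr hg)
  rw [if_pos hmn] at this
  rwa [← decomposition.decompose'_apply, ← decomposition.decompose'_apply]

theorem homogeneousSubmodule_inf_span_pair {g₁ g₂ : MvPolynomial σ R} {d₁ d₂ n : ℕ}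
    (hg₁ : g₁.IsHomogeneous d₁) (hg₂ : g₂.IsHomogeneous d₂) (h₁ : d₁ ≤ n) (h₂ : d₂ ≤ n) :
    homogeneousSubmodule σ R n ⊓ (Ideal.span {g₁, g₂}).restrictScalars R =
      (homogeneousSubmodule σ R (n - d₁)).map (LinearMap.mulLeft R g₁) ⊔
        (homogeneousSubmodule σ R (n - d₂)).map (LinearMap.mulLeft R g₂) := by
  refine le_antisymm ?_ (sup_le ?_ ?_)
  · rintro _ ⟨hG, hGI⟩
    obtain ⟨a, b, rfl⟩ := Ideal.mem_span_pair.mp hGI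
    rw [← homogeneousComponent_eq_self hG, map_add, mul_comm a, mul_comm b,
      hg₁.homogeneousComponent_mul a h₁, hg₂.homogeneousComponent_mul b h₂]
    exact Submodule.add_mem_sup ⟨_, homogeneousComponent_mem _ a, rfl⟩
      ⟨_, homogeneousComponent_mem _ b, rfl⟩
  · rintro _ ⟨P, hP, rfl⟩
    refine ⟨?_, Ideal.mul_mem_right _ _ (Ideal.subset_span (by simp))⟩
    simpa [Nat.add_sub_cancel' h₁] using hg₁.mul hP
  · rintro _ ⟨P, hP, rfl⟩
    refine ⟨?_, Ideal.mul_mem_right _ _ (Ideal.subset_span (by simp))⟩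
    simpa [Nat.add_sub_cancel' h₂] using hg₂.mul hP

end Homogeneous

section Field

variable {σ K : Type*} [Field K]

theorem disjoint_map_mulLeft_homogeneousSubmodule {g₁ g₂ : MvPolynomial σ K} {d₁ n₁ n₂ : ℕ}
    (hg₁ : g₁.IsHomogeneous d₁) (hrel : IsRelPrime g₁ g₂) (hn₂ : n₂ < d₁) :
    Disjoint ((homogeneousSubmodule σ K n₂).map (LinearMap.mulLeft K g₂))
      ((homogeneousSubmodule σ K n₁).map (LinearMap.mulLeft K g₁)) := by
  rw [Submodule.disjoint_def]
  rintro _ ⟨P, hP, rfl⟩ ⟨Q, -, hQ⟩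
  obtain ⟨h, rfl⟩ : g₁ ∣ P := hrel.dvd_of_dvd_mul_left ⟨Q, hQ.symm⟩
  suffices g₁ * h = 0 by simp [this]
  by_contra hne
  have hdeg := totalDegree_mul_of_isDomain (left_ne_zero_of_mul hne) (right_ne_zero_of_mul hne)
  rw [(hP : (g₁ * h).IsHomogeneous n₂).totalDegree hne,
    hg₁.totalDegree (left_ne_zero_of_mul hne)] at hdeg
  omega

end Field

section BinaryForms

variable {K : Type*} [Field K]

noncomputable def binaryMonomial (n : ℕ) (i : Fin (n + 1)) : MvPolynomial (Fin 2) K :=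
  X 0 ^ (n - i) * X 1 ^ (i : ℕ)

theorem binaryMonomial_eq_monomial (n : ℕ) (i : Fin (n + 1)) :
    (binaryMonomial n i : MvPolynomial (Fin 2) K) =
      monomial (Finsupp.single 0 (n - i) + Finsupp.single 1 (i : ℕ)) 1 := by
  rw [binaryMonomial, X_pow_eq_monomial, X_pow_eq_monomial, monomial_mul, mul_one]

theorem linearIndependent_binaryMonomial (n : ℕ) :
    LinearIndependent K (binaryMonomial n : Fin (n + 1) → MvPolynomial (Fin 2) K) := by
  have hinj : Function.Injective fun i : Fin (n + 1) =>
      Finsupp.single (0 : Fin 2) (n - i) + Finsupp.single 1 (i : ℕ) := fun i j hij => by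
    simpa [Fin.ext_iff] using DFunLike.congr_fun hij 1
  have hcomp : binaryMonomial n = basisMonomials (Fin 2) K ∘ fun i : Fin (n + 1) =>
      Finsupp.single (0 : Fin 2) (n - i) + Finsupp.single 1 (i : ℕ) := by
    ext1 i
    rw [binaryMonomial_eq_monomial, Function.comp_apply, coe_basisMonomials]
  rw [hcomp]
  exact (basisMonomials (Fin 2) K).linearIndependent.comp _ hinj

theorem span_range_binaryMonomial (n : ℕ) :
    Submodule.span K (Set.range (binaryMonomial n)) = homogeneousSubmodule (Fin 2) K n := by
  refine le_antisymm (Submodule.span_le.mpr ?_) ?_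
  · rintro _ ⟨i, rfl⟩
    rw [binaryMonomial_eq_monomial]
    refine isHomogeneous_monomial _ ?_
    rw [map_add, Finsupp.degree_single, Finsupp.degree_single]
    omega
  · rw [homogeneousSubmodule_eq_finsupp_supported, AddMonoidAlgebra.supported_eq_span_single,
      Submodule.span_le]
    rintro _ ⟨m, hm, rfl⟩
    have hm : m 0 + m 1 = n := by
      rw [← Fin.sum_univ_two, ← Finsupp.degree_eq_sum]
      exact hm
    refine Submodule.subset_span ⟨⟨m 1, by omega⟩, ?_⟩
    rw [binaryMonomial_eq_monomial, Fin.val_mk, show n - m 1 = m 0 by omega]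
    show _ = monomial m 1
    congr
    ext j
    fin_cases j <;> simp

theorem span_range_mul_binaryMonomial (g : MvPolynomial (Fin 2) K) (n : ℕ) :
    Submodule.span K (Set.range fun i => g * binaryMonomial n i) =
      (homogeneousSubmodule (Fin 2) K n).map (LinearMap.mulLeft K g) := by
  rw [← span_range_binaryMonomial, Submodule.map_span, ← Set.range_comp]
  rfl

theorem linearIndependent_mul_binaryMonomial {g : MvPolynomial (Fin 2) K} (hg : g ≠ 0) (n : ℕ) :
    LinearIndependent K fun i => g * binaryMonomial n i :=
  (linearIndependent_binaryMonomial n).map' (LinearMap.mulLeft K g)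
    (LinearMap.ker_eq_bot.mpr (mul_right_injective₀ hg))

theorem linearIndependent_sumElim_mul_binaryMonomial {g₁ g₂ : MvPolynomial (Fin 2) K}
    {d₁ d₂ n₁ n₂ : ℕ} (hg₁ : g₁.IsHomogeneous d₁) (hg₂ : g₂.IsHomogeneous d₂)
    (hrel : IsRelPrime g₁ g₂) (hn₂ : n₂ < d₁) (hn₁ : n₁ < d₂) :
    LinearIndependent K (Sum.elim (fun i => g₂ * binaryMonomial n₂ i)
      (fun j => g₁ * binaryMonomial n₁ j)) := by
  have hg₁0 : g₁ ≠ 0 := by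
    rintro rfl
    exact hg₂.not_isUnit (by omega) (isRelPrime_zero_left.mp hrel)
  have hg₂0 : g₂ ≠ 0 := by
    rintro rfl
    exact hg₁.not_isUnit (by omega) (isRelPrime_zero_right.mp hrel)
  refine .sum_type (linearIndependent_mul_binaryMonomial hg₂0 n₂)
    (linearIndependent_mul_binaryMonomial hg₁0 n₁) ?_
  rw [span_range_mul_binaryMonomial, span_range_mul_binaryMonomial]
  exact disjoint_map_mulLeft_homogeneousSubmodule hg₁ hrel hn₂

end BinaryForms

section AlgClosed

variable {σ K : Type*} [Field K] [IsAlgClosed K]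

theorem exists_dvd_X_pow_of_eval_ne_zero [Finite σ] {c : MvPolynomial σ K}
    (hc : ∀ v ≠ 0, eval v c ≠ 0) (i : σ) : ∃ n, c ∣ X i ^ n := by
  have hX : X i ∈ vanishingIdeal K (zeroLocus K (Ideal.span {c})) := by
    rw [mem_vanishingIdeal_iff]
    intro v hv
    have hcv : eval v c = 0 := by simpa using hv c (Ideal.mem_span_singleton_self c)
    obtain rfl : v = 0 := by_contra fun hv0 => hc v hv0 hcv
    simp
  rw [vanishingIdeal_zeroLocus_eq_radical] at hX
  obtain ⟨n, hn⟩ := hX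
  exact ⟨n, Ideal.mem_span_singleton.mp hn⟩

theorem exists_ne_zero_eval_eq_zero_of_not_isUnit {c : MvPolynomial (Fin 2) K} (hc : ¬IsUnit c) :
    ∃ v ≠ 0, eval v c = 0 := by
  by_contra! h
  obtain ⟨m, hm⟩ := exists_dvd_X_pow_of_eval_ne_zero h 0
  obtain ⟨n, hn⟩ := exists_dvd_X_pow_of_eval_ne_zero h 1
  have hX : IsRelPrime (X 0 : MvPolynomial (Fin 2) K) (X 1) :=
    X_prime.irreducible.isRelPrime_iff_not_dvd.mpr (by simp [X_dvd_X])
  exact hc (hX.pow hm hn)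

theorem isRelPrime_of_forall_eval_eq_zero {g₁ g₂ : MvPolynomial (Fin 2) K}
    (h : ∀ x y : K, eval ![x, y] g₁ = 0 → eval ![x, y] g₂ = 0 → x = 0 ∧ y = 0) :
    IsRelPrime g₁ g₂ := by
  intro c hc₁ hc₂
  by_contra hc
  obtain ⟨v, hv, hcv⟩ := exists_ne_zero_eval_eq_zero_of_not_isUnit hc
  have hvec : ![v 0, v 1] = v := by ext i; fin_cases i <;> rfl
  have eval_eq_zero {g} (hcg : c ∣ g) : eval ![v 0, v 1] g = 0 := by
    rw [hvec]; exact zero_dvd_iff.mp (hcv ▸ map_dvd (eval v) hcg)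
  obtain ⟨h0, h1⟩ := h _ _ (eval_eq_zero hc₁) (eval_eq_zero hc₂)
  exact hv (by ext i; fin_cases i <;> simp [h0, h1])

end AlgClosed

end MvPolynomial

theorem stmt1_general {K : Type*} [Field K] [IsAlgClosed K]
    (d d₁ d₂ : ℕ) (f g₁ g₂ : MvPolynomial (Fin 2) K)
    (hg₁ : g₁.IsHomogeneous d₁) (hg₂ : g₂.IsHomogeneous d₂)
    (hd₁ : 2 ≤ d₁) (hd₁₂ : d₁ ≤ d₂) (hsum : d₁ + d₂ = d + 2)
    (hcz : ∀ x y : K, eval ![x, y] g₁ = 0 → eval ![x, y] g₂ = 0 → x = 0 ∧ y = 0)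
    (hap : ∀ G : MvPolynomial (Fin 2) K, apolar G f = 0 ↔ G ∈ Ideal.span {g₁, g₂}) :
    LinearIndependent K (fun i : Fin d =>
      if (i : ℕ) ≤ d₁ - 2 then g₂ * X 0 ^ (d₁ - 2 - (i : ℕ)) * X 1 ^ (i : ℕ)
      else g₁ * X 0 ^ (d₂ - 2 - ((i : ℕ) - (d₁ - 1))) * X 1 ^ ((i : ℕ) - (d₁ - 1)))
    ∧ (Submodule.span K (Set.range (fun i : Fin d =>
        if (i : ℕ) ≤ d₁ - 2 then g₂ * X 0 ^ (d₁ - 2 - (i : ℕ)) * X 1 ^ (i : ℕ)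
        else g₁ * X 0 ^ (d₂ - 2 - ((i : ℕ) - (d₁ - 1))) * X 1 ^ ((i : ℕ) - (d₁ - 1))))
        : Set (MvPolynomial (Fin 2) K))
      = {G | G.IsHomogeneous d ∧ apolar G f = 0} := by
  obtain ⟨a, rfl⟩ : ∃ a, d₁ = a + 2 := ⟨d₁ - 2, by omega⟩
  obtain ⟨b, rfl⟩ : ∃ b, d₂ = b + 2 := ⟨d₂ - 2, by omega⟩
  obtain rfl : d = a + 1 + (b + 1) := by omega
  have hfamily : (fun i : Fin (a + 1 + (b + 1)) =>
      if (i : ℕ) ≤ a + 2 - 2 then g₂ * X 0 ^ (a + 2 - 2 - (i : ℕ)) * X 1 ^ (i : ℕ)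
      else g₁ * X 0 ^ (b + 2 - 2 - ((i : ℕ) - (a + 2 - 1))) * X 1 ^ ((i : ℕ) - (a + 2 - 1))) =
      Sum.elim (fun i => g₂ * binaryMonomial a i) (fun j => g₁ * binaryMonomial b j) ∘
        finSumFinEquiv.symm := by
    rw [Equiv.eq_comp_symm]
    ext1 (i | j)
    · simp [binaryMonomial, mul_assoc, i.is_le]
    · simp [binaryMonomial, mul_assoc, show ¬a + 1 + (j : ℕ) ≤ a by omega]
  have hW : {G | G.IsHomogeneous (a + 1 + (b + 1)) ∧ apolar G f = 0} =
      (homogeneousSubmodule (Fin 2) K (a + 1 + (b + 1)) ⊓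
        (Ideal.span {g₁, g₂}).restrictScalars K : Submodule K (MvPolynomial (Fin 2) K)) := by
    ext G
    simp [hap]
  have hrel := isRelPrime_of_forall_eval_eq_zero hcz
  rw [hfamily, hW, homogeneousSubmodule_inf_span_pair hg₁ hg₂ (by omega) (by omega),
    EquivLike.range_comp, Set.Sum.elim_range, Submodule.span_union,
    span_range_mul_binaryMonomial, span_range_mul_binaryMonomial, sup_comm,
    linearIndependent_equiv, show a + 1 + (b + 1) - (a + 2) = b by omega,
    show a + 1 + (b + 1) - (b + 2) = a by omega]
  exact ⟨linearIndependent_sumElim_mul_binaryMonomial hg₁ hg₂ hrel (by omega) (by omega), rfl⟩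

theorem stmt1 {K : Type*} [Field K] [IsAlgClosed K] [CharZero K]
    (d d₁ d₂ : ℕ) (f g₁ g₂ : MvPolynomial (Fin 2) K)
    (hf : f ≠ 0) (hfd : f.IsHomogeneous d)
    (hg₁ : g₁.IsHomogeneous d₁) (hg₂ : g₂.IsHomogeneous d₂)
    (hd₁ : 2 ≤ d₁) (hd₁₂ : d₁ ≤ d₂) (hsum : d₁ + d₂ = d + 2)
    (hcz : ∀ x y : K, eval ![x, y] g₁ = 0 → eval ![x, y] g₂ = 0 → x = 0 ∧ y = 0)
    (hap : ∀ G : MvPolynomial (Fin 2) K, apolar G f = 0 ↔ G ∈ Ideal.span {g₁, g₂}) :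
    LinearIndependent K (fun i : Fin d =>
      if (i : ℕ) ≤ d₁ - 2 then g₂ * X 0 ^ (d₁ - 2 - (i : ℕ)) * X 1 ^ (i : ℕ)
      else g₁ * X 0 ^ (d₂ - 2 - ((i : ℕ) - (d₁ - 1))) * X 1 ^ ((i : ℕ) - (d₁ - 1)))
    ∧ (Submodule.span K (Set.range (fun i : Fin d =>
        if (i : ℕ) ≤ d₁ - 2 then g₂ * X 0 ^ (d₁ - 2 - (i : ℕ)) * X 1 ^ (i : ℕ)
        else g₁ * X 0 ^ (d₂ - 2 - ((i : ℕ) - (d₁ - 1))) * X 1 ^ ((i : ℕ) - (d₁ - 1))))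
        : Set (MvPolynomial (Fin 2) K))
      = {G | G.IsHomogeneous d ∧ apolar G f = 0} :=
  stmt1_general d d₁ d₂ f g₁ g₂ hg₁ hg₂ hd₁ hd₁₂ hsum hcz hap
end

section
/- Let f ∈ K[s,t] be a nonzero homogeneous polynomial of degree d. Suppose g₁, g₂ ∈ K[s,t] are homogeneous of degrees d₁ and d₂ with 2 ≤ d₁ ≤ d₂ and d₁ + d₂ = d + 2, having no common zero other than (0,0), and that the apolar ideal {G ∈ K[s,t] : G∘f = 0} equals the ideal generated by g₁ and g₂. Let h₁, …, h_d be any K-basis of W_f and let φ_h : K[z₁,…,z_d] → K[s,t] be the K-algebra homomorphism with φ_h(z_i) = h_i. Let ψ : K[z₁,…,z_d] → K[s,t] be the K-algebra homomorphism sending the variables z₁,…,z_d in order to g₂·s^{d₁−2}, g₂·s^{d₁−3}t, …, g₂·t^{d₁−2}, g₁·s^{d₂−2}, g₁·s^{d₂−3}t, …, g₁·t^{d₂−2}. Then there exists a graded K-algebra automorphism σ of K[z₁,…,z_d], induced by an invertible linear substitution of the variables z₁,…,z_d, such that σ maps the ideal ker φ_h onto the ideal ker ψ. (In geometric terms: the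 projected curve π_p(C_d) ⊂ P^{d−1}, for p the point of P^d corresponding to f, is projectively equivalent to the curve parametrized by [g₂(α,β)α^{d₁−2} : … : g₂(α,β)β^{d₁−2} : g₁(α,β)α^{d₂−2} : … : g₁(α,β)β^{d₂−2}].) -/
/-!
Since the apolar ideal of `f` is `(g₁, g₂)`, the space `W_f` is the degree-`d` part of that ideal,
which is spanned by the `d` forms `g₂ · s^(d₁-2-i) tⁱ` and `g₁ · s^(d₂-2-j) tʲ`. By counting
dimensions these form a basis of `W_f`, so `φ_h` is `ψ` precomposed with the invertible linear
substitution expressing the `hᵢ` in this basis, and that substitution carries `ker φ_h` onto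
`ker ψ`.
-/

open MvPolynomial

namespace MvPolynomial

variable {σ R : Type*} [CommSemiring R]

theorem homogeneousComponent_mul_of_isHomogeneous (A : MvPolynomial σ R) {g : MvPolynomial σ R}
    {k n : ℕ} (hg : g.IsHomogeneous k) (hkn : k ≤ n) :
    homogeneousComponent n (A * g) = homogeneousComponent (n - k) A * g := by
  have hcomp : ∀ i, homogeneousComponent n (homogeneousComponent i A * g)
      = if i = n - k then homogeneousComponent (n - k) A * g else 0 := by
    intro i
    rw [homogeneousComponent_of_mem ((homogeneousComponent_isHomogeneous i A).mul hg)]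
    by_cases hi : i = n - k
    · rw [if_pos (by omega), if_pos hi, hi]
    · rw [if_neg (by omega), if_neg hi]
  conv_lhs => rw [← sum_homogeneousComponent A, Finset.sum_mul, map_sum]
  simp only [hcomp, Finset.sum_ite_eq', Finset.mem_range]
  split_ifs with hmem
  · rfl
  · rw [homogeneousComponent_eq_zero _ _ (by omega), zero_mul]

theorem IsHomogeneous.exists_eq_mul_add_mul_of_mem_span_pair {G g₁ g₂ : MvPolynomial σ R}
    {n d₁ d₂ : ℕ} (hG : G.IsHomogeneous n) (hg₁ : g₁.IsHomogeneous d₁)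
    (hg₂ : g₂.IsHomogeneous d₂) (hd₁ : d₁ ≤ n) (hd₂ : d₂ ≤ n) (hGI : G ∈ Ideal.span {g₁, g₂}) :
    ∃ A B : MvPolynomial σ R, A.IsHomogeneous (n - d₁) ∧ B.IsHomogeneous (n - d₂) ∧
      G = A * g₁ + B * g₂ := by
  obtain ⟨A, B, rfl⟩ := Ideal.mem_span_pair.mp hGI
  refine ⟨_, _, homogeneousComponent_isHomogeneous (n - d₁) A,
    homogeneousComponent_isHomogeneous (n - d₂) B, ?_⟩
  rw [← homogeneousComponent_mul_of_isHomogeneous A hg₁ hd₁,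
    ← homogeneousComponent_mul_of_isHomogeneous B hg₂ hd₂, ← map_add,
    homogeneousComponent_eq_self hG]

theorem IsHomogeneous.mul_mem_of_forall_X_pow_mul_X_pow_mem {P g : MvPolynomial (Fin 2) R} {m : ℕ}
    (hP : P.IsHomogeneous m) {S : Submodule R (MvPolynomial (Fin 2) R)}
    (hS : ∀ j ≤ m, g * X 0 ^ (m - j) * X 1 ^ j ∈ S) : P * g ∈ S := by
  rw [← P.support_sum_monomial_coeff, Finset.sum_mul]
  refine Submodule.sum_mem _ fun u hu => ?_
  have hdeg : u 0 + u 1 = m := by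
    simpa [Finsupp.weight_apply, Finsupp.sum_fintype, Fin.sum_univ_two] using
      hP (mem_support_iff.mp hu)
  have hmon : monomial u (P.coeff u) * g = P.coeff u • (g * X 0 ^ (m - u 1) * X 1 ^ u 1) := by
    rw [monomial_eq, Finsupp.prod_pow, Fin.prod_univ_two, smul_eq_C_mul, ← hdeg,
      Nat.add_sub_cancel]
    ring
  rw [hmon]
  exact S.smul_mem _ (hS _ (by omega))

end MvPolynomial

section PairIdealBasis

variable {R : Type*} [CommSemiring R] {d d₁ d₂ : ℕ} {g₁ g₂ : MvPolynomial (Fin 2) R}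

/-- The coordinates of `ψ`: `g₂` times the monomials of degree `d₁ - 2`, then `g₁` times the
monomials of degree `d₂ - 2`. -/
noncomputable def pairIdealBasis (d₁ d₂ : ℕ) (g₁ g₂ : MvPolynomial (Fin 2) R) (i : Fin d) :
    MvPolynomial (Fin 2) R :=
  if (i : ℕ) ≤ d₁ - 2 then g₂ * X 0 ^ (d₁ - 2 - (i : ℕ)) * X 1 ^ (i : ℕ)
  else g₁ * X 0 ^ (d₂ - 2 - ((i : ℕ) - (d₁ - 1))) * X 1 ^ ((i : ℕ) - (d₁ - 1))

theorem pairIdealBasis_isHomogeneous (hg₁ : g₁.IsHomogeneous d₁) (hg₂ : g₂.IsHomogeneous d₂)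
    (hd₁ : 2 ≤ d₁) (hsum : d₁ + d₂ = d + 2) (i : Fin d) :
    (pairIdealBasis d₁ d₂ g₁ g₂ i).IsHomogeneous d := by
  unfold pairIdealBasis
  split_ifs with hi
  · convert (hg₂.mul (isHomogeneous_X_pow _ _)).mul (isHomogeneous_X_pow _ _) using 1
    omega
  · convert (hg₁.mul (isHomogeneous_X_pow _ _)).mul (isHomogeneous_X_pow _ _) using 1
    omega

theorem pairIdealBasis_mem_span_pair (i : Fin d) :
    pairIdealBasis d₁ d₂ g₁ g₂ i ∈ Ideal.span {g₁, g₂} := by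
  unfold pairIdealBasis
  split_ifs
  · exact Ideal.mul_mem_right _ _ <| Ideal.mul_mem_right _ _ <| Ideal.subset_span <| by simp
  · exact Ideal.mul_mem_right _ _ <| Ideal.mul_mem_right _ _ <| Ideal.subset_span <| by simp

theorem span_pairIdealBasis (hg₁ : g₁.IsHomogeneous d₁) (hg₂ : g₂.IsHomogeneous d₂)
    (hd₁ : 2 ≤ d₁) (hd₂ : 2 ≤ d₂) (hsum : d₁ + d₂ = d + 2) :
    Submodule.span R (Set.range (pairIdealBasis d₁ d₂ g₁ g₂ : Fin d → _)) =
      homogeneousSubmodule (Fin 2) R d ⊓ (Ideal.span {g₁, g₂}).restrictScalars R := by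
  refine le_antisymm (Submodule.span_le.mpr ?_) fun G ⟨hG, hGI⟩ => ?_
  · rintro _ ⟨i, rfl⟩
    exact ⟨pairIdealBasis_isHomogeneous hg₁ hg₂ hd₁ hsum i, pairIdealBasis_mem_span_pair i⟩
  obtain ⟨A, B, hA, hB, rfl⟩ :=
    IsHomogeneous.exists_eq_mul_add_mul_of_mem_span_pair hG hg₁ hg₂ (by omega) (by omega) hGI
  refine Submodule.add_mem _ (hA.mul_mem_of_forall_X_pow_mul_X_pow_mem fun j hj => ?_)
    (hB.mul_mem_of_forall_X_pow_mul_X_pow_mem fun j hj => ?_)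
  · refine Submodule.subset_span ⟨⟨d₁ - 1 + j, by omega⟩, ?_⟩
    rw [pairIdealBasis, Fin.val_mk, if_neg (by omega), Nat.add_sub_cancel_left]
    congr 3
    omega
  · refine Submodule.subset_span ⟨⟨j, by omega⟩, ?_⟩
    rw [pairIdealBasis, Fin.val_mk, if_pos (by omega)]
    congr 3
    omega

end PairIdealBasis

namespace Matrix

section CommSemiring

variable {R S m n : Type*} [CommSemiring R] [CommSemiring S] [Algebra R S] [Fintype n]

theorem toMvPolynomial_eq_sum_C_mul_X (M : Matrix m n R) :
    M.toMvPolynomial = fun i => ∑ j, C (M i j) * X j := by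
  ext1 i
  simp only [toMvPolynomial, C_mul_X_eq_monomial]

theorem aeval_toMvPolynomial (M : Matrix m n R) (w : n → S) (i : m) :
    aeval w (M.toMvPolynomial i) = ∑ j, M i j • w j := by
  simp [toMvPolynomial_eq_sum_C_mul_X, Algebra.smul_def]

end CommSemiring

section CommRing

variable {R S n : Type*} [CommRing R] [CommSemiring S] [Algebra R S] [Fintype n] [DecidableEq n]

theorem bind₁_toMvPolynomial_surjective {M : Matrix n n R} (hM : IsUnit M) :
    Function.Surjective (bind₁ M.toMvPolynomial) := by
  obtain ⟨u, rfl⟩ := hM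
  intro p
  refine ⟨bind₁ (↑u⁻¹ : Matrix n n R).toMvPolynomial p, ?_⟩
  simp only [bind₁_bind₁, ← toMvPolynomial_mul, Units.inv_mul, toMvPolynomial_one, bind₁_X_left,
    AlgHom.id_apply]

theorem map_bind₁_toMvPolynomial_ker_aeval {M : Matrix n n R} (hM : IsUnit M) {h w : n → S}
    (hhw : ∀ i, h i = ∑ j, M i j • w j) :
    Ideal.map (bind₁ M.toMvPolynomial) (RingHom.ker (aeval h)) = RingHom.ker (aeval w) := by
  have hcomp : (aeval w).comp (bind₁ M.toMvPolynomial) = aeval h := by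
    rw [aeval_comp_bind₁]
    congr 1
    exact funext fun i => (aeval_toMvPolynomial M w i).trans (hhw i).symm
  rw [← hcomp, ← AlgHom.comap_ker]
  exact Ideal.map_comap_of_surjective _ (bind₁_toMvPolynomial_surjective hM) _

end CommRing

end Matrix

open Matrix in
theorem exists_isUnit_matrix_of_span_eq {ι K V : Type*} [Fintype ι] [DecidableEq ι] [Field K]
    [AddCommGroup V] [Module K V] {h w : ι → V} (hh : LinearIndependent K h)
    (hspan : Submodule.span K (Set.range h) = Submodule.span K (Set.range w)) :
    ∃ N : Matrix ι ι K, IsUnit N ∧ ∀ i, h i = ∑ j, N i j • w j := by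
  have hw : LinearIndependent K w := by
    rw [linearIndependent_iff_card_eq_finrank_span, Set.finrank, ← hspan]
    exact linearIndependent_iff_card_eq_finrank_span.mp hh
  let Bh := (Module.Basis.span hh).map (LinearEquiv.ofEq _ _ hspan)
  let Bw := Module.Basis.span hw
  refine ⟨(Bw.toMatrix Bh)ᵀ, ?_, fun i => ?_⟩
  · let := Bw.invertibleToMatrix Bh
    exact (isUnit_transpose _).mpr (isUnit_of_invertible _)
  · have := congrArg Subtype.val (Bw.sum_toMatrix_smul_self Bh (j := i))
    simpa [Bh, Bw, Module.Basis.span_apply] using this.symm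

theorem stmt2_general {K : Type*} [Field K]
    (d d₁ d₂ : ℕ) (f g₁ g₂ : MvPolynomial (Fin 2) K)
    (hg₁ : g₁.IsHomogeneous d₁) (hg₂ : g₂.IsHomogeneous d₂)
    (hd₁ : 2 ≤ d₁) (hd₁₂ : d₁ ≤ d₂) (hsum : d₁ + d₂ = d + 2)
    (hap : ∀ G : MvPolynomial (Fin 2) K, apolar G f = 0 ↔ G ∈ Ideal.span {g₁, g₂})
    (h : Fin d → MvPolynomial (Fin 2) K) (hind : LinearIndependent K h)
    (hspan : (Submodule.span K (Set.range h) : Set (MvPolynomial (Fin 2) K))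
      = {G | G.IsHomogeneous d ∧ apolar G f = 0}) :
    ∃ M : Matrix (Fin d) (Fin d) K, IsUnit M ∧
      Ideal.map
        (aeval (fun i : Fin d => ∑ j : Fin d, C (M i j) * X j) :
          MvPolynomial (Fin d) K →ₐ[K] MvPolynomial (Fin d) K)
        (RingHom.ker (aeval h : MvPolynomial (Fin d) K →ₐ[K] MvPolynomial (Fin 2) K))
      = RingHom.ker
          (aeval (fun i : Fin d =>
            if (i : ℕ) ≤ d₁ - 2 then g₂ * X 0 ^ (d₁ - 2 - (i : ℕ)) * X 1 ^ (i : ℕ)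
            else g₁ * X 0 ^ (d₂ - 2 - ((i : ℕ) - (d₁ - 1))) * X 1 ^ ((i : ℕ) - (d₁ - 1))) :
            MvPolynomial (Fin d) K →ₐ[K] MvPolynomial (Fin 2) K) := by
  have hW : Submodule.span K (Set.range h) =
      homogeneousSubmodule (Fin 2) K d ⊓ (Ideal.span {g₁, g₂}).restrictScalars K := by
    ext G
    rw [← SetLike.mem_coe, hspan]
    simp [hap, mem_homogeneousSubmodule]
  obtain ⟨N, hN, hhN⟩ := exists_isUnit_matrix_of_span_eq hind
    (hW.trans (span_pairIdealBasis hg₁ hg₂ hd₁ (hd₁.trans hd₁₂) hsum).symm)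
  refine ⟨N, hN, ?_⟩
  rw [← Matrix.toMvPolynomial_eq_sum_C_mul_X]
  exact Matrix.map_bind₁_toMvPolynomial_ker_aeval hN hhN

theorem stmt2 {K : Type*} [Field K] [IsAlgClosed K] [CharZero K]
    (d d₁ d₂ : ℕ) (f g₁ g₂ : MvPolynomial (Fin 2) K)
    (hf : f ≠ 0) (hfd : f.IsHomogeneous d)
    (hg₁ : g₁.IsHomogeneous d₁) (hg₂ : g₂.IsHomogeneous d₂)
    (hd₁ : 2 ≤ d₁) (hd₁₂ : d₁ ≤ d₂) (hsum : d₁ + d₂ = d + 2)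
    (hcz : ∀ x y : K, eval ![x, y] g₁ = 0 → eval ![x, y] g₂ = 0 → x = 0 ∧ y = 0)
    (hap : ∀ G : MvPolynomial (Fin 2) K, apolar G f = 0 ↔ G ∈ Ideal.span {g₁, g₂})
    (h : Fin d → MvPolynomial (Fin 2) K) (hind : LinearIndependent K h)
    (hspan : (Submodule.span K (Set.range h) : Set (MvPolynomial (Fin 2) K))
      = {G | G.IsHomogeneous d ∧ apolar G f = 0}) :
    ∃ M : Matrix (Fin d) (Fin d) K, IsUnit M ∧
      Ideal.map
        (aeval (fun i : Fin d => ∑ j : Fin d, C (M i j) * X j) :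
          MvPolynomial (Fin d) K →ₐ[K] MvPolynomial (Fin d) K)
        (RingHom.ker (aeval h : MvPolynomial (Fin d) K →ₐ[K] MvPolynomial (Fin 2) K))
      = RingHom.ker
          (aeval (fun i : Fin d =>
            if (i : ℕ) ≤ d₁ - 2 then g₂ * X 0 ^ (d₁ - 2 - (i : ℕ)) * X 1 ^ (i : ℕ)
            else g₁ * X 0 ^ (d₂ - 2 - ((i : ℕ) - (d₁ - 1))) * X 1 ^ ((i : ℕ) - (d₁ - 1))) :
            MvPolynomial (Fin d) K →ₐ[K] MvPolynomial (Fin 2) K) :=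
  stmt2_general d d₁ d₂ f g₁ g₂ hg₁ hg₂ hd₁ hd₁₂ hsum hap h hind hspan
end

section
/- Let d ≥ 6 and let f ∈ K[s,t] be a nonzero homogeneous polynomial of degree d whose annihilator ideal {G ∈ K[s,t] : G∘f = 0} equals the ideal of K[s,t] generated by s³ − st² and t^{d−1}. Then for every K-basis h₁,…,h_d of W_f, the degree-2 component (ker φ_h)₂ is spanned as a K-vector space by the homogeneous quadratic polynomials of rank at most 3 contained in it. Consequently, the ideal of K[z₁,…,z_d] generated by (ker φ_h)₂ (the homogeneous ideal of the scheme X = π_p(C_d) ∪ L, where L is the trisecant line meeting π_p(C_d) in three distinct simple points) is generated by quadratic polynomials of rank at most 3; that is, X satisfies property QR(3). -/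
open MvPolynomial

/-- A polynomial `q` has rank at most `k` as a quadric: it is a sum of `k` squares of
linear forms. -/
def rankLE {K : Type*} [CommSemiring K] {σ : Type*} (k : ℕ) (q : MvPolynomial σ K) : Prop :=
  ∃ ℓ : Fin k → MvPolynomial σ K, (∀ i, (ℓ i).IsHomogeneous 1) ∧ q = ∑ i, (ℓ i) ^ 2

/-!
Write `g = s³ - s t²`. The forms `s^(d-3-k) t^k g` (`k ≤ d - 3`), `s t^(d-1)` and `t^d` are a basis
of `W_f`, so after a linear change of coordinates `z ↦ y` the map `φ_h` sends `y k` to the `k`-th of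
them. All products of two basis forms are monomials times a power of `s² - t²`; in particular the
image of `y j * y l` (`j, l ≤ d - 3`) only depends on `j + l`.

A quadric `x y - z²` with linear `x, y, z` has rank at most `3` (`K` contains `√-1`). Let `H` be the
span of the rank-`≤ 3` quadrics in the kernel and `C` the span of `2d + 1` products `y j * y l`
whose images are a basis of the binary forms of degree `2d` (their degrees after `t = 1` are distinct).
Explicit kernel quadrics `x y - z²` put every product `y j * y l` into `H + C`, antidiagonal by
antidiagonal. As `φ_h` is injective on `C` and `H ≤ ker φ_h`, the modular law gives
`(ker φ_h)₂ = H`; the statement about ideals follows.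
-/
theorem Polynomial.linearIndependent_of_natDegree_injective {K ι : Type*} [Field K]
    {v : ι → Polynomial K} (hv : ∀ i, v i ≠ 0) (hinj : Function.Injective (natDegree ∘ v)) :
    LinearIndependent K v := by
  rw [linearIndependent_iff']
  intro s g hsum i hi
  have hpair : {j | j ∈ s ∧ g j • v j ≠ 0}.Pairwise
      (Function.onFun (· ≠ ·) fun j ↦ (g j • v j).degree) := by
    intro a ⟨_, ha⟩ b ⟨_, hb⟩ hab
    simp only [Function.onFun, degree_eq_natDegree ha, degree_eq_natDegree hb,
      natDegree_smul _ (left_ne_zero_of_smul ha), natDegree_smul _ (left_ne_zero_of_smul hb),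
      ne_eq, Nat.cast_inj]
    exact fun h ↦ hab (hinj h)
  have hsup := degree_sum_eq_of_disjoint _ s hpair
  rw [hsum, degree_zero, eq_comm, Finset.sup_eq_bot_iff] at hsup
  exact (smul_eq_zero.mp (degree_eq_bot.mp (hsup i hi))).resolve_right (hv i)

theorem Ideal.span_eq_span_of_subset_span_sep {R A : Type*} [CommRing R] [CommRing A] [Algebra R A]
    {S : Set A} {p : A → Prop} (hS : S ⊆ Submodule.span R {q | q ∈ S ∧ p q}) :
    Ideal.span S = Ideal.span {q | q ∈ Ideal.span S ∧ p q} := by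
  refine le_antisymm (Ideal.span_le.mpr fun q hq ↦ ?_) (Ideal.span_le.mpr fun q hq ↦ hq.1)
  refine Submodule.span_le_restrictScalars R A _ (Submodule.span_mono ?_ (hS hq))
  exact fun r hr ↦ ⟨Ideal.subset_span hr.1, hr.2⟩

theorem rankLE_three_mul_sub_sq {K σ : Type*} [Field K] [NeZero (2 : K)] {ι : K} (hι : ι ^ 2 = -1)
    {x y z : MvPolynomial σ K} (hx : x ∈ homogeneousSubmodule σ K 1)
    (hy : y ∈ homogeneousSubmodule σ K 1) (hz : z ∈ homogeneousSubmodule σ K 1) :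
    rankLE 3 (x * y - z ^ 2) := by
  refine ⟨![(2⁻¹ : K) • (x + y), (ι / 2) • (x - y), ι • z], fun i ↦ ?_, ?_⟩
  · rw [← mem_homogeneousSubmodule]
    fin_cases i
    exacts [Submodule.smul_mem _ _ (add_mem hx hy), Submodule.smul_mem _ _ (sub_mem hx hy),
      Submodule.smul_mem _ _ hz]
  · have h2 : (C (2⁻¹ : K) : MvPolynomial σ K) * 2 = 1 := by
      rw [← map_ofNat C 2, ← C_mul, inv_mul_cancel₀ two_ne_zero, C_1]
    have hCι : (C ι : MvPolynomial σ K) ^ 2 = -1 := by rw [← C_pow, hι, C_neg, C_1]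
    simp only [Fin.sum_univ_three, Matrix.cons_val_zero, Matrix.cons_val_one,
      Matrix.cons_val_two, Matrix.head_cons, Matrix.tail_cons, smul_eq_C_mul, div_eq_mul_inv,
      C_mul]
    linear_combination (-(x * y) * (2 * C (2⁻¹ : K) + 1)) * h2
      - (C (2⁻¹ : K) ^ 2 * (x - y) ^ 2 + z ^ 2) * hCι

section LinearForms

variable {K σ A : Type*} [Field K] [CommRing A] [Algebra K A]

theorem map_aeval_homogeneousSubmodule_one (h : σ → A) :
    (homogeneousSubmodule σ K 1).map (aeval h).toLinearMap = Submodule.span K (Set.range h) := by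
  rw [homogeneousSubmodule_one_eq_span_X, Submodule.map_span, ← Set.range_comp]
  congr
  ext i
  simp

theorem exists_mem_homogeneousSubmodule_one_aeval_eq {h : σ → A} {a : A}
    (ha : a ∈ Submodule.span K (Set.range h)) :
    ∃ p ∈ homogeneousSubmodule σ K 1, aeval h p = a := by
  rw [← map_aeval_homogeneousSubmodule_one] at ha
  exact ha

theorem disjoint_homogeneousSubmodule_one_ker_aeval {h : σ → A} (hind : LinearIndependent K h) :
    Disjoint (homogeneousSubmodule σ K 1) (LinearMap.ker (aeval h).toLinearMap) := by
  have hX : (aeval h).toLinearMap ∘ (X : σ → MvPolynomial σ K) = h := funext fun i ↦ by simp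
  rw [homogeneousSubmodule_one_eq_span_X]
  exact Submodule.range_ker_disjoint (by rwa [hX])

theorem homogeneousSubmodule_one_le_span {h : σ → A} (hind : LinearIndependent K h) {ι : Type*}
    {y : ι → MvPolynomial σ K} (hy : ∀ n, y n ∈ homogeneousSubmodule σ K 1)
    (hspan : Submodule.span K (Set.range h) ≤ Submodule.span K (Set.range (aeval h ∘ y))) :
    homogeneousSubmodule σ K 1 ≤ Submodule.span K (Set.range y) := by
  intro p hp
  have hmem : aeval h p ∈ (Submodule.span K (Set.range y)).map (aeval h).toLinearMap := by
    rw [Submodule.map_span, ← Set.range_comp]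
    exact hspan (map_aeval_homogeneousSubmodule_one (K := K) h ▸ Submodule.mem_map_of_mem hp)
  obtain ⟨q, hq, hqp⟩ := hmem
  have hyq : Submodule.span K (Set.range y) ≤ homogeneousSubmodule σ K 1 :=
    Submodule.span_le.mpr (Set.range_subset_iff.mpr hy)
  have hdiff : q - p = 0 :=
    (Submodule.disjoint_def.mp (disjoint_homogeneousSubmodule_one_ker_aeval hind)) _
      (sub_mem (hyq hq) hp) (by simpa [sub_eq_zero] using hqp)
  rwa [sub_eq_zero.mp hdiff] at hq

end LinearForms

namespace ProjectedRNC

noncomputable section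

variable {K : Type*} [Field K]

variable (K) in
/-- `s^a t^b (s² - t²)^e`, where `s = X 0` and `t = X 1`. -/
def stForm (a b e : ℕ) : MvPolynomial (Fin 2) K :=
  X 0 ^ a * X 1 ^ b * (X 0 ^ 2 - X 1 ^ 2) ^ e

theorem stForm_mul (a b e a' b' e' : ℕ) :
    stForm K a b e * stForm K a' b' e' = stForm K (a + a') (b + b') (e + e') := by
  simp only [stForm]
  ring

theorem stForm_add_two_sub (a b e : ℕ) :
    stForm K (a + 2) b e - stForm K a (b + 2) e = stForm K a b (e + 1) := by
  simp only [stForm]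
  ring

theorem stForm_isHomogeneous (a b e : ℕ) : (stForm K a b e).IsHomogeneous (a + b + 2 * e) := by
  have hX (i : Fin 2) (n : ℕ) : (X i ^ n : MvPolynomial (Fin 2) K).IsHomogeneous n := by
    simpa using (isHomogeneous_X K i).pow n
  exact ((hX 0 a).mul (hX 1 b)).mul (((hX 0 2).sub (hX 1 2)).pow e)

variable (K) in
def dehomogenize : MvPolynomial (Fin 2) K →ₐ[K] Polynomial K :=
  aeval ![Polynomial.X, 1]

theorem dehomogenize_stForm (a b e : ℕ) :
    dehomogenize K (stForm K a b e)
      = Polynomial.X ^ a * (Polynomial.X ^ 2 - Polynomial.C 1) ^ e := by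
  simp [dehomogenize, stForm]

theorem monic_dehomogenize_stForm (a b e : ℕ) : (dehomogenize K (stForm K a b e)).Monic := by
  rw [dehomogenize_stForm]
  exact (Polynomial.monic_X_pow a).mul ((Polynomial.monic_X_pow_sub_C 1 two_ne_zero).pow e)

theorem natDegree_dehomogenize_stForm (a b e : ℕ) :
    (dehomogenize K (stForm K a b e)).natDegree = a + 2 * e := by
  rw [dehomogenize_stForm, (Polynomial.monic_X_pow a).natDegree_mul
    ((Polynomial.monic_X_pow_sub_C 1 two_ne_zero).pow e),
    (Polynomial.monic_X_pow_sub_C 1 two_ne_zero).natDegree_pow, Polynomial.natDegree_X_pow,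
    Polynomial.natDegree_X_pow_sub_C, mul_comm]

theorem linearIndependent_of_forall_eq_stForm {ι : Type*} {v : ι → MvPolynomial (Fin 2) K}
    (deg : ι → ℕ) (hv : ∀ i, ∃ a b e, v i = stForm K a b e ∧ a + 2 * e = deg i)
    (hdeg : Function.Injective deg) : LinearIndependent K v := by
  choose a b e hv hdeg_eq using hv
  refine LinearIndependent.of_comp (dehomogenize K).toLinearMap
    (Polynomial.linearIndependent_of_natDegree_injective (fun i ↦ ?_) fun i j hij ↦ hdeg ?_)
  · simpa [hv i] using (monic_dehomogenize_stForm (K := K) (a i) (b i) (e i)).ne_zero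
  · simpa [hv, natDegree_dehomogenize_stForm, hdeg_eq] using hij

section WBasis

variable {d : ℕ}

variable (K) in
/-- For `k < d` a basis of `W_f`: the multiples `s^(d-3-k) t^k (s³ - s t²)` of the cubic generator
for `k ≤ d - 3`, then `s t^(d-1)` and `t^d`; every `k ≥ d` gives `t^d` again. -/
def wBasis (d k : ℕ) : MvPolynomial (Fin 2) K :=
  if k ≤ d - 3 then stForm K (d - 2 - k) k 1
  else if k = d - 2 then stForm K 1 (d - 1) 0 else stForm K 0 d 0

theorem wBasis_of_le {k : ℕ} (hk : k ≤ d - 3) : wBasis K d k = stForm K (d - 2 - k) k 1 :=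
  if_pos hk

theorem wBasis_sub_two (hd : 3 ≤ d) : wBasis K d (d - 2) = stForm K 1 (d - 1) 0 := by
  rw [wBasis, if_neg (by omega), if_pos rfl]

theorem wBasis_sub_one (hd : 3 ≤ d) : wBasis K d (d - 1) = stForm K 0 d 0 := by
  rw [wBasis, if_neg (by omega), if_neg (by omega)]

theorem wBasis_isHomogeneous (hd : 2 ≤ d) (k : ℕ) : (wBasis K d k).IsHomogeneous d := by
  unfold wBasis
  split_ifs
  · convert stForm_isHomogeneous (K := K) (d - 2 - k) k 1 using 1
    omega
  · convert stForm_isHomogeneous (K := K) 1 (d - 1) 0 using 1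
    omega
  · simpa using stForm_isHomogeneous (K := K) 0 d 0

theorem wBasis_mem_span_pair (hd : 3 ≤ d) (k : ℕ) :
    wBasis K d k ∈
      Ideal.span {X 0 ^ 3 - X 0 * X 1 ^ 2, (X 1 : MvPolynomial (Fin 2) K) ^ (d - 1)} := by
  have hcubic := Ideal.subset_span
    (Set.mem_insert (X 0 ^ 3 - X 0 * X 1 ^ 2 : MvPolynomial (Fin 2) K) {X 1 ^ (d - 1)})
  have hpow := Ideal.subset_span (Set.mem_insert_of_mem (X 0 ^ 3 - X 0 * X 1 ^ 2)
    (Set.mem_singleton ((X 1 : MvPolynomial (Fin 2) K) ^ (d - 1))))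
  unfold wBasis stForm
  split_ifs
  · convert Ideal.mul_mem_left _ (X 0 ^ (d - 3 - k) * X 1 ^ k) hcubic using 1
    rw [show d - 2 - k = d - 3 - k + 1 by omega]
    ring
  · convert Ideal.mul_mem_left _ (X 0) hpow using 1
    ring
  · convert Ideal.mul_mem_left _ (X 1) hpow using 1
    rw [← pow_succ', Nat.sub_add_cancel (by omega : 1 ≤ d)]
    ring

theorem linearIndependent_wBasis (hd : 3 ≤ d) :
    LinearIndependent K fun k : Fin d ↦ wBasis K d k := by
  refine linearIndependent_of_forall_eq_stForm
    (fun k : Fin d ↦ if (k : ℕ) ≤ d - 3 then d - k else if (k : ℕ) = d - 2 then 1 else 0)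
    (fun k ↦ ?_) (fun k l hkl ↦ Fin.ext ?_)
  · unfold wBasis
    split_ifs
    exacts [⟨_, _, _, rfl, by omega⟩, ⟨_, _, _, rfl, rfl⟩, ⟨_, _, _, rfl, rfl⟩]
  · have := k.isLt
    have := l.isLt
    simp only at hkl
    split_ifs at hkl <;> omega

theorem span_le_span_wBasis (hd : 3 ≤ d) {h : Fin d → MvPolynomial (Fin 2) K}
    (hind : LinearIndependent K h)
    (hW : ∀ k, wBasis K d k ∈ Submodule.span K (Set.range h)) :
    Submodule.span K (Set.range h) ≤ Submodule.span K (Set.range fun k : Fin d ↦ wBasis K d k) :=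
  have := FiniteDimensional.span_of_finite K (Set.finite_range h)
  (Submodule.eq_of_le_of_finrank_le
    (Submodule.span_le.mpr (Set.range_subset_iff.mpr fun k : Fin d ↦ hW k))
    (by rw [finrank_span_eq_card hind, finrank_span_eq_card (linearIndependent_wBasis hd)])).ge

theorem wBasis_mul_wBasis {j k m : ℕ} (hj : j ≤ d - 3) (hk : k ≤ d - 3) (hm : j + k = m) :
    wBasis K d j * wBasis K d k = stForm K (2 * d - 4 - m) m 2 := by
  rw [wBasis_of_le hj, wBasis_of_le hk, stForm_mul]
  congr 1; omega

theorem wBasis_sub_two_mul (hd : 3 ≤ d) {j : ℕ} (hj : j ≤ d - 3) :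
    wBasis K d (d - 2) * wBasis K d j = stForm K (d - 1 - j) (d - 1 + j) 1 := by
  rw [wBasis_sub_two hd, wBasis_of_le hj, stForm_mul]
  congr 1; omega

theorem wBasis_sub_one_mul (hd : 3 ≤ d) {j m : ℕ} (hj : j ≤ d - 3) (hm : j + 1 = m) :
    wBasis K d (d - 1) * wBasis K d j = stForm K (d - 1 - m) (d - 1 + m) 1 := by
  rw [wBasis_sub_one hd, wBasis_of_le hj, stForm_mul]
  congr 1 <;> omega

theorem stForm_sub_stForm {a m : ℕ} (ha : a + 2 ≤ d - 1) (hm : d - 1 + a = m) :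
    stForm K (d - 1 - a) (d - 1 + a) 1 - stForm K (d - 1 - (a + 2)) (d - 1 + (a + 2)) 1
      = stForm K (2 * d - 4 - m) m 2 := by
  rw [show d - 1 - a = d - 3 - a + 2 by omega, show d - 1 - (a + 2) = d - 3 - a by omega,
    show d - 1 + (a + 2) = d - 1 + a + 2 by omega, stForm_add_two_sub]
  congr 1; omega

end WBasis

section RankThree

variable {σ A : Type*} [CommRing A] [Algebra K A]

variable (K) in
def rankThreeSpan (h : σ → A) : Submodule K (MvPolynomial σ K) :=
  Submodule.span K {q | q ∈ RingHom.ker (aeval h : MvPolynomial σ K →ₐ[K] A) ∧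
    q.IsHomogeneous 2 ∧ rankLE 3 q}

theorem mul_sub_sq_mem_rankThreeSpan [NeZero (2 : K)] {ι : K} (hι : ι ^ 2 = -1) {h : σ → A}
    {x y z : MvPolynomial σ K} (hx : x ∈ homogeneousSubmodule σ K 1)
    (hy : y ∈ homogeneousSubmodule σ K 1) (hz : z ∈ homogeneousSubmodule σ K 1)
    (hker : aeval h (x * y) = aeval h z ^ 2) : x * y - z ^ 2 ∈ rankThreeSpan K h := by
  refine Submodule.subset_span ⟨?_, ?_, rankLE_three_mul_sub_sq hι hx hy hz⟩
  · rw [RingHom.mem_ker, map_sub, map_pow, hker, sub_self]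
  · rw [mem_homogeneousSubmodule] at hx hy hz
    exact (hx.mul hy).sub (by simpa using hz.pow 2)

end RankThree

section Complement

variable {d : ℕ} (y : ℕ → MvPolynomial (Fin d) K)

/-- Products `y j * y l` which, once `y k` maps to `wBasis K d k`, map to a basis of the binary
forms of degree `2d`: the `n`-th image has dehomogenized degree `2d - n`. -/
def complementProd (d : ℕ) (y : ℕ → MvPolynomial (Fin d) K) (n : ℕ) : MvPolynomial (Fin d) K :=
  if n ≤ d - 2 then y (n / 2) * y (n - n / 2)
  else if n ≤ 2 * d - 4 then y (d - 2) * y (n - (d - 1))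
  else if n = 2 * d - 3 then y (d - 1) * y (d - 3)
  else if n = 2 * d - 2 then y (d - 2) * y (d - 2)
  else if n = 2 * d - 1 then y (d - 2) * y (d - 1)
  else y (d - 1) * y (d - 1)

def complementSpan : Submodule K (MvPolynomial (Fin d) K) :=
  Submodule.span K (Set.range fun n : Fin (2 * d + 1) ↦ complementProd d y n)

theorem mem_complementSpan {n : ℕ} (hn : n ≤ 2 * d) {p : MvPolynomial (Fin d) K}
    (hp : complementProd d y n = p) : p ∈ complementSpan y :=
  hp ▸ Submodule.subset_span ⟨⟨n, by omega⟩, rfl⟩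

theorem center_mem_complementSpan {m : ℕ} (hm : m ≤ d - 2) :
    y (m / 2) * y (m - m / 2) ∈ complementSpan y :=
  mem_complementSpan y (n := m) (by omega) (if_pos hm)

theorem v_mul_mem_complementSpan (hd : 4 ≤ d) {j : ℕ} (hj : j ≤ d - 3) :
    y (d - 2) * y j ∈ complementSpan y :=
  mem_complementSpan y (n := d - 1 + j) (by omega) (by
    rw [complementProd, if_neg (show ¬d - 1 + j ≤ d - 2 by omega),
      if_pos (show d - 1 + j ≤ 2 * d - 4 by omega), Nat.add_sub_cancel_left])

theorem w_mul_mem_complementSpan (hd : 4 ≤ d) : y (d - 1) * y (d - 3) ∈ complementSpan y :=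
  mem_complementSpan y (n := 2 * d - 3) (by omega) (by
    rw [complementProd, if_neg (by omega), if_neg (by omega), if_pos rfl])

theorem v_mul_v_mem_complementSpan (hd : 4 ≤ d) : y (d - 2) * y (d - 2) ∈ complementSpan y :=
  mem_complementSpan y (n := 2 * d - 2) (by omega) (by
    rw [complementProd, if_neg (by omega), if_neg (by omega), if_neg (by omega), if_pos rfl])

theorem v_mul_w_mem_complementSpan (hd : 4 ≤ d) : y (d - 2) * y (d - 1) ∈ complementSpan y :=
  mem_complementSpan y (n := 2 * d - 1) (by omega) (by
    rw [complementProd, if_neg (by omega), if_neg (by omega), if_neg (by omega), if_neg (by omega),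
      if_pos rfl])

theorem w_mul_w_mem_complementSpan (hd : 4 ≤ d) : y (d - 1) * y (d - 1) ∈ complementSpan y :=
  mem_complementSpan y (n := 2 * d) (by omega) (by
    rw [complementProd, if_neg (by omega), if_neg (by omega), if_neg (by omega), if_neg (by omega),
      if_neg (by omega)])

theorem exists_aeval_complementProd_eq_stForm {h : Fin d → MvPolynomial (Fin 2) K}
    (hd : 4 ≤ d) (hy : ∀ n < d, aeval h (y n) = wBasis K d n) {n : ℕ} (hn : n ≤ 2 * d) :
    ∃ a b e, aeval h (complementProd d y n) = stForm K a b e ∧ a + 2 * e = 2 * d - n := by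
  unfold complementProd
  split_ifs <;> simp (disch := omega) only [map_mul, hy]
  · exact ⟨_, _, _, wBasis_mul_wBasis (m := n) (by omega) (by omega) (by omega), by omega⟩
  · exact ⟨_, _, _, wBasis_sub_two_mul (by omega) (by omega), by omega⟩
  · exact ⟨_, _, _, wBasis_sub_one_mul (by omega) (by omega) rfl, by omega⟩
  · exact ⟨_, _, _, by rw [wBasis_sub_two (by omega), stForm_mul], by omega⟩
  · exact ⟨_, _, _, by rw [wBasis_sub_two (by omega), wBasis_sub_one (by omega), stForm_mul],
      by omega⟩
  · exact ⟨_, _, _, by rw [wBasis_sub_one (by omega), stForm_mul], by omega⟩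

theorem disjoint_complementSpan_ker {h : Fin d → MvPolynomial (Fin 2) K} (hd : 4 ≤ d)
    (hy : ∀ n < d, aeval h (y n) = wBasis K d n) :
    Disjoint (complementSpan y) (LinearMap.ker (aeval h).toLinearMap) :=
  Submodule.range_ker_disjoint <| linearIndependent_of_forall_eq_stForm
    (fun n : Fin (2 * d + 1) ↦ 2 * d - n)
    (fun n ↦ exists_aeval_complementProd_eq_stForm y hd hy (by omega))
    (fun m n hmn ↦ Fin.ext (by simp only at hmn; omega))

end Complement

section Quadrics

variable [NeZero (2 : K)] {ι : K} (hι : ι ^ 2 = -1) {d : ℕ} {h : Fin d → MvPolynomial (Fin 2) K}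
  {y : ℕ → MvPolynomial (Fin d) K} (hy : ∀ n < d, aeval h (y n) = wBasis K d n)
  (hlin : ∀ n, y n ∈ homogeneousSubmodule (Fin d) K 1)
include hι hy hlin

-- In the names below `v = y (d - 2)` and `w = y (d - 1)`.

theorem hankel_mem {i : ℕ} (hi : i + 2 ≤ d - 3) :
    y i * y (i + 2) - y (i + 1) ^ 2 ∈ rankThreeSpan K h := by
  refine mul_sub_sq_mem_rankThreeSpan hι (hlin _) (hlin _) (hlin _) ?_
  simp (disch := omega) only [map_mul, hy]
  rw [sq, wBasis_mul_wBasis (by omega) (by omega) (show i + (i + 2) = 2 * i + 2 by omega),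
    wBasis_mul_wBasis (by omega) (by omega) (show (i + 1) + (i + 1) = 2 * i + 2 by omega)]

-- `P m` is the image of `y j * y (m - j)` and `N j` that of `v * y j`.
local notation "E" k:max => wBasis K d k
local notation "P" m:max => stForm K (2 * d - 4 - m) m 2
local notation "N" j:max => stForm K (d - 1 - j) (d - 1 + j) 1

theorem hankelSum_mem {i j : ℕ} (hi : i + 2 ≤ d - 3) (hj : j + 2 ≤ d - 3) :
    (y i + y j) * (y (i + 2) + y (j + 2)) - (y (i + 1) + y (j + 1)) ^ 2 ∈ rankThreeSpan K h := by
  refine mul_sub_sq_mem_rankThreeSpan hι (add_mem (hlin _) (hlin _)) (add_mem (hlin _) (hlin _))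
    (add_mem (hlin _) (hlin _)) ?_
  simp (disch := omega) only [map_mul, map_add, hy]
  have e₁ : E i * E (i + 2) = P (2 * i + 2) := wBasis_mul_wBasis (by omega) (by omega) (by omega)
  have e₂ : E i * E (j + 2) = P (i + j + 2) := wBasis_mul_wBasis (by omega) (by omega) (by omega)
  have e₃ : E j * E (i + 2) = P (i + j + 2) := wBasis_mul_wBasis (by omega) (by omega) (by omega)
  have e₄ : E j * E (j + 2) = P (2 * j + 2) := wBasis_mul_wBasis (by omega) (by omega) (by omega)
  have f₁ : E (i + 1) * E (i + 1) = P (2 * i + 2) :=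
    wBasis_mul_wBasis (by omega) (by omega) (by omega)
  have f₂ : E (i + 1) * E (j + 1) = P (i + j + 2) :=
    wBasis_mul_wBasis (by omega) (by omega) (by omega)
  have f₃ : E (j + 1) * E (j + 1) = P (2 * j + 2) :=
    wBasis_mul_wBasis (by omega) (by omega) (by omega)
  linear_combination e₁ + e₂ + e₃ + e₄ - f₁ - 2 * f₂ - f₃

theorem v_mul_sub_sq_mem {a D : ℕ} (hD : 2 ≤ D) (haD : a + 2 * D = d - 1) :
    y (d - 2) * (y a - y (a + 2)) - y (a + D) ^ 2 ∈ rankThreeSpan K h := by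
  refine mul_sub_sq_mem_rankThreeSpan hι (hlin _) (sub_mem (hlin _) (hlin _)) (hlin _) ?_
  simp (disch := omega) only [map_mul, map_sub, hy]
  have n₁ : E (d - 2) * E a = N a := wBasis_sub_two_mul (by omega) (by omega)
  have n₂ : E (d - 2) * E (a + 2) = N (a + 2) := wBasis_sub_two_mul (by omega) (by omega)
  have e : E (a + D) * E (a + D) = P (d - 1 + a) :=
    wBasis_mul_wBasis (by omega) (by omega) (by omega)
  have n : N a - N (a + 2) = P (d - 1 + a) := stForm_sub_stForm (by omega) rfl
  linear_combination n₁ - n₂ - e + n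

theorem iota_mul_sub_sq_mem {a c : ℕ} (ha : a + 5 ≤ d) (hac : 2 * c + 4 = a + d) :
    ((2 * ι) • (y (d - 3) + y (d - 2)) - y (d - 4)) * (y a - y (a + 2))
      - (y (c + 1) + ι • y c) ^ 2 ∈ rankThreeSpan K h := by
  refine mul_sub_sq_mem_rankThreeSpan hι
    (sub_mem (Submodule.smul_mem _ _ (add_mem (hlin _) (hlin _))) (hlin _))
    (sub_mem (hlin _) (hlin _)) (add_mem (hlin _) (Submodule.smul_mem _ _ (hlin _))) ?_
  simp (disch := omega) only [map_mul, map_sub, map_add, map_smul, hy]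
  simp only [smul_eq_C_mul, C_mul, map_ofNat]
  have e₁ : E (d - 3) * E a = P (d - 3 + a) := wBasis_mul_wBasis (by omega) (by omega) (by omega)
  have e₂ : E (d - 3) * E (a + 2) = P (d - 1 + a) :=
    wBasis_mul_wBasis (by omega) (by omega) (by omega)
  have e₃ : E (d - 4) * E a = P (d - 4 + a) := wBasis_mul_wBasis (by omega) (by omega) (by omega)
  have e₄ : E (d - 4) * E (a + 2) = P (d - 2 + a) :=
    wBasis_mul_wBasis (by omega) (by omega) (by omega)
  have f₁ : E (c + 1) * E (c + 1) = P (d - 2 + a) :=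
    wBasis_mul_wBasis (by omega) (by omega) (by omega)
  have f₂ : E (c + 1) * E c = P (d - 3 + a) := wBasis_mul_wBasis (by omega) (by omega) (by omega)
  have f₃ : E c * E c = P (d - 4 + a) := wBasis_mul_wBasis (by omega) (by omega) (by omega)
  have n₁ : E (d - 2) * E a = N a := wBasis_sub_two_mul (by omega) (by omega)
  have n₂ : E (d - 2) * E (a + 2) = N (a + 2) := wBasis_sub_two_mul (by omega) (by omega)
  have n : N a - N (a + 2) = P (d - 1 + a) := stForm_sub_stForm (by omega) rfl
  have hCι : (C ι : MvPolynomial (Fin 2) K) ^ 2 = -1 := by rw [← C_pow, hι, C_neg, C_1]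
  linear_combination 2 * C ι * (e₁ - e₂ + n₁ - n₂ + n - f₂) - e₃ + e₄ - f₁ - C ι ^ 2 * f₃
    - P (d - 4 + a) * hCι

theorem v_sub_w_mul_sub_sq_mem {a D : ℕ} (hD : 2 ≤ D) (haD : a + 2 * D = d - 1) :
    (y (d - 2) - y (d - 1)) * (y a + y (a + 1)) - y (a + D) ^ 2 ∈ rankThreeSpan K h := by
  refine mul_sub_sq_mem_rankThreeSpan hι (sub_mem (hlin _) (hlin _)) (add_mem (hlin _) (hlin _))
    (hlin _) ?_
  simp (disch := omega) only [map_mul, map_sub, map_add, hy]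
  have n₁ : E (d - 2) * E a = N a := wBasis_sub_two_mul (by omega) (by omega)
  have n₂ : E (d - 2) * E (a + 1) = N (a + 1) := wBasis_sub_two_mul (by omega) (by omega)
  have n₃ : E (d - 1) * E a = N (a + 1) := wBasis_sub_one_mul (by omega) (by omega) rfl
  have n₄ : E (d - 1) * E (a + 1) = N (a + 2) := wBasis_sub_one_mul (by omega) (by omega) rfl
  have e : E (a + D) * E (a + D) = P (d - 1 + a) :=
    wBasis_mul_wBasis (by omega) (by omega) (by omega)
  have n : N a - N (a + 2) = P (d - 1 + a) := stForm_sub_stForm (by omega) rfl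
  linear_combination n₁ + n₂ - n₃ - n₄ - e + n

theorem v_add_w_mul_sub_sq_mem {a D : ℕ} (hD : 2 ≤ D) (haD : a + 2 * D = d - 1) :
    (y (d - 2) + y (d - 1)) * (y a - y (a + 1)) - y (a + D) ^ 2 ∈ rankThreeSpan K h := by
  refine mul_sub_sq_mem_rankThreeSpan hι (add_mem (hlin _) (hlin _)) (sub_mem (hlin _) (hlin _))
    (hlin _) ?_
  simp (disch := omega) only [map_mul, map_sub, map_add, hy]
  have n₁ : E (d - 2) * E a = N a := wBasis_sub_two_mul (by omega) (by omega)
  have n₂ : E (d - 2) * E (a + 1) = N (a + 1) := wBasis_sub_two_mul (by omega) (by omega)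
  have n₃ : E (d - 1) * E a = N (a + 1) := wBasis_sub_one_mul (by omega) (by omega) rfl
  have n₄ : E (d - 1) * E (a + 1) = N (a + 2) := wBasis_sub_one_mul (by omega) (by omega) rfl
  have e : E (a + D) * E (a + D) = P (d - 1 + a) :=
    wBasis_mul_wBasis (by omega) (by omega) (by omega)
  have n : N a - N (a + 2) = P (d - 1 + a) := stForm_sub_stForm (by omega) rfl
  linear_combination n₁ - n₂ + n₃ - n₄ - e + n

theorem w_mul_sub_sq_mem {D : ℕ} (hD : 3 ≤ D) (hdD : d = 2 * D) :
    y (d - 1) * (y 0 - y 2) - y D ^ 2 ∈ rankThreeSpan K h := by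
  refine mul_sub_sq_mem_rankThreeSpan hι (hlin _) (sub_mem (hlin _) (hlin _)) (hlin _) ?_
  simp (disch := omega) only [map_mul, map_sub, hy]
  have n₁ : E (d - 1) * E 0 = N 1 := wBasis_sub_one_mul (by omega) (by omega) rfl
  have n₂ : E (d - 1) * E 2 = N 3 := wBasis_sub_one_mul (by omega) (by omega) rfl
  have e : E D * E D = P d := wBasis_mul_wBasis (by omega) (by omega) (by omega)
  have n : N 1 - N 3 = P d := stForm_sub_stForm (by omega) (by omega)
  linear_combination n₁ - n₂ - e + n

theorem mul_sub_mul_succ_mem (n : ℕ) {k : ℕ} (hkn : k + n + 1 ≤ d - 3) :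
    y k * y (k + n + 1) - y (k + 1) * y (k + n) ∈ rankThreeSpan K h := by
  induction n using Nat.twoStepInduction generalizing k with
  | zero => simp [mul_comm]
  | one => simpa [sq, add_assoc] using hankel_mem hι hy hlin (i := k) (by omega)
  | more n ih _ =>
    -- `hsum - h₁ - h₂` is the second difference `y k y (j+2) + y (k+2) y j - 2 y (k+1) y (j+1)`
    -- along an antidiagonal, with `j = k + n + 1`.
    have hsum := hankelSum_mem hι hy hlin (i := k) (j := k + n + 1) (by omega) (by omega)
    have h₁ := hankel_mem hι hy hlin (i := k) (by omega)
    have h₂ := hankel_mem hι hy hlin (i := k + n + 1) (by omega)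
    have h₃ := ih (k := k + 1) (by omega)
    convert add_mem (sub_mem (sub_mem hsum h₁) h₂) h₃ using 1
    ring_nf

theorem mul_sub_center_mem {k l : ℕ} (hkl : k ≤ l) (hl : l ≤ d - 3) :
    y k * y l - y ((k + l) / 2) * y (k + l - (k + l) / 2) ∈ rankThreeSpan K h := by
  obtain ⟨n, rfl⟩ := Nat.exists_eq_add_of_le hkl
  induction n using Nat.strong_induction_on generalizing k with
  | _ n ih =>
  rcases Nat.lt_or_ge n 2 with hn | hn
  · rw [show (k + (k + n)) / 2 = k by omega, show k + (k + n) - k = k + n by omega, sub_self]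
    exact zero_mem _
  obtain ⟨n, rfl⟩ := Nat.exists_eq_add_of_le hn
  have hstep := mul_sub_mul_succ_mem hι hy hlin (n + 1) (k := k) (by omega)
  have hinner := ih n (by omega) (k := k + 1) (by omega) (by omega)
  rw [show k + 1 + (k + 1 + n) = k + (k + (2 + n)) by omega] at hinner
  convert add_mem hstep hinner using 1
  ring_nf

local notation "Q" => rankThreeSpan K h ⊔ complementSpan y

theorem mul_mem_of_center_mem {k l : ℕ} (hkl : k ≤ l) (hl : l ≤ d - 3)
    (hc : y ((k + l) / 2) * y (k + l - (k + l) / 2) ∈ Q) : y k * y l ∈ Q := by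
  simpa using add_mem (Submodule.mem_sup_left (mul_sub_center_mem hι hy hlin hkl hl)) hc

theorem sq_mem (hd : 4 ≤ d) {c : ℕ} (hc : c ≤ d - 3) : y c * y c ∈ Q := by
  by_cases hsmall : 2 * c ≤ d - 2
  · simpa [show 2 * c / 2 = c by omega, show 2 * c - c = c by omega] using
      Submodule.mem_sup_right (center_mem_complementSpan y hsmall)
  have hF := v_mul_sub_sq_mem hι hy hlin (a := 2 * c - (d - 1)) (D := d - 1 - c) (by omega)
    (by omega)
  rw [show 2 * c - (d - 1) + (d - 1 - c) = c by omega] at hF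
  have hv₁ := v_mul_mem_complementSpan y hd (j := 2 * c - (d - 1)) (by omega)
  have hv₂ := v_mul_mem_complementSpan y hd (j := 2 * c - (d - 1) + 2) (by omega)
  convert sub_mem (sub_mem (Submodule.mem_sup_right hv₁) (Submodule.mem_sup_right hv₂))
    (Submodule.mem_sup_left hF) using 1
  ring

-- The `ι`-quadric solves for `2ι • y (a + 2) * y (d - 3)` on the antidiagonal `2c + 3`; every other
-- product in it lies on a lower antidiagonal or in the complement.
theorem odd_center_mem {c : ℕ} (hc : d ≤ 2 * c + 4) (hcd : 2 * c + 3 ≤ 2 * d - 6)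
    (hlow : ∀ k l, k ≤ l → l ≤ d - 3 → k + l < 2 * c + 3 → y k * y l ∈ Q) :
    y (c + 1) * y (c + 2) ∈ Q := by
  set a := 2 * c + 4 - d with ha
  have hF := iota_mul_sub_sq_mem hι hy hlin (a := a) (c := c) (by omega) (by omega)
  have hι0 : 2 * ι ≠ 0 := mul_ne_zero two_ne_zero (by rintro rfl; norm_num at hι)
  have hkey : y (a + 2) * y (d - 3) ∈ Q := by
    refine (Submodule.smul_mem_iff _ hι0).mp ?_
    have e : (2 * ι) • (y (a + 2) * y (d - 3)) = (2 * ι) • (y a * y (d - 3))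
        + (2 * ι) • (y (d - 2) * y a) - (2 * ι) • (y (d - 2) * y (a + 2))
        - y a * y (d - 4) + y (a + 2) * y (d - 4) - y (c + 1) * y (c + 1)
        - (2 * ι) • (y c * y (c + 1)) - (ι * ι) • (y c * y c)
        - (((2 * ι) • (y (d - 3) + y (d - 2)) - y (d - 4)) * (y a - y (a + 2))
          - (y (c + 1) + ι • y c) ^ 2) := by
      simp only [smul_eq_C_mul, C_mul, map_ofNat]
      ring
    have hv {j : ℕ} (hj : j ≤ d - 3) : y (d - 2) * y j ∈ Q :=
      Submodule.mem_sup_right (v_mul_mem_complementSpan y (by omega) hj)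
    rw [e]
    refine sub_mem (sub_mem (sub_mem (sub_mem (add_mem (sub_mem (sub_mem (add_mem ?_ ?_) ?_) ?_)
      ?_) ?_) ?_) ?_) (Submodule.mem_sup_left hF)
    · exact Submodule.smul_mem _ _ (hlow _ _ (by omega) le_rfl (by omega))
    · exact Submodule.smul_mem _ _ (hv (by omega))
    · exact Submodule.smul_mem _ _ (hv (by omega))
    · exact hlow _ _ (by omega) (by omega) (by omega)
    · exact hlow _ _ (by omega) (by omega) (by omega)
    · exact hlow _ _ le_rfl (by omega) (by omega)
    · exact Submodule.smul_mem _ _ (hlow _ _ (by omega) (by omega) (by omega))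
    · exact Submodule.smul_mem _ _ (hlow _ _ le_rfl (by omega) (by omega))
  have hcenter := mul_sub_center_mem hι hy hlin (k := a + 2) (l := d - 3) (by omega) (by omega)
  rw [show (a + 2 + (d - 3)) / 2 = c + 1 by omega,
    show a + 2 + (d - 3) - (c + 1) = c + 2 by omega] at hcenter
  simpa using sub_mem hkey (Submodule.mem_sup_left hcenter)

theorem center_mem (hd : 6 ≤ d) {m : ℕ} (hm : m ≤ 2 * d - 6) :
    y (m / 2) * y (m - m / 2) ∈ Q := by
  induction m using Nat.strong_induction_on with
  | _ m ih =>
  have hlow (k l : ℕ) (hkl : k ≤ l) (hl : l ≤ d - 3) (hlt : k + l < m) : y k * y l ∈ Q :=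
    mul_mem_of_center_mem hι hy hlin hkl hl (ih _ hlt (by omega))
  rcases Nat.even_or_odd' m with ⟨c, rfl | rfl⟩
  · simpa [show 2 * c / 2 = c by omega, show 2 * c - c = c by omega] using
      sq_mem hι hy hlin (by omega) (c := c) (by omega)
  by_cases hsmall : 2 * c + 1 ≤ d - 2
  · exact Submodule.mem_sup_right (center_mem_complementSpan y hsmall)
  obtain ⟨c, rfl⟩ : ∃ c', c = c' + 1 := ⟨c - 1, by omega⟩
  rw [show (2 * (c + 1) + 1) / 2 = c + 1 by omega, show 2 * (c + 1) + 1 - (c + 1) = c + 2 by omega]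
  exact odd_center_mem hι hy hlin (by omega) (by omega) hlow

theorem mul_mem_of_le (hd : 6 ≤ d) {k l : ℕ} (hk : k ≤ d - 3) (hl : l ≤ d - 3) : y k * y l ∈ Q := by
  wlog hkl : k ≤ l generalizing k l with H
  · rw [mul_comm]
    exact H hl hk (by omega)
  exact mul_mem_of_center_mem hι hy hlin hkl hl (center_mem hι hy hlin hd (by omega))

theorem w_mul_mem_of_add_eq (hd : 4 ≤ d) {a D : ℕ} (hD : 2 ≤ D) (haD : a + 2 * D = d - 1) :
    y (d - 1) * y a ∈ Q := by
  have h₅ := v_sub_w_mul_sub_sq_mem hι hy hlin hD haD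
  have h₆ := v_add_w_mul_sub_sq_mem hι hy hlin hD haD
  have hv := v_mul_mem_complementSpan y hd (j := a + 1) (by omega)
  refine (Submodule.smul_mem_iff _ (two_ne_zero (α := K))).mp ?_
  convert add_mem (Submodule.mem_sup_right (add_mem hv hv))
    (Submodule.mem_sup_left (sub_mem h₆ h₅)) using 1
  rw [two_smul]
  ring

theorem w_mul_succ_mem_of_add_eq (hd : 4 ≤ d) {a D : ℕ} (hD : 2 ≤ D) (haD : a + 2 * D = d - 1) :
    y (d - 1) * y (a + 1) ∈ Q := by
  have h₅ := v_sub_w_mul_sub_sq_mem hι hy hlin hD haD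
  have h₆ := v_add_w_mul_sub_sq_mem hι hy hlin hD haD
  have hv := v_mul_mem_complementSpan y hd (j := a) (by omega)
  have hz := sq_mem hι hy hlin hd (c := a + D) (by omega)
  refine (Submodule.smul_mem_iff _ (two_ne_zero (α := K))).mp ?_
  convert sub_mem (sub_mem (Submodule.mem_sup_right (add_mem hv hv)) (add_mem hz hz))
    (Submodule.mem_sup_left (add_mem h₅ h₆)) using 1
  rw [two_smul]
  ring

theorem w_mul_mem (hd : 6 ≤ d) {a : ℕ} (ha : a ≤ d - 4) : y (d - 1) * y a ∈ Q := by
  rcases Nat.even_or_odd' (d - 1 - a) with ⟨D, hD | hD⟩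
  · exact w_mul_mem_of_add_eq hι hy hlin (by omega) (D := D) (by omega) (by omega)
  cases a with
  | zero =>
    have h₇ := w_mul_sub_sq_mem hι hy hlin (D := D + 1) (by omega) (by omega)
    have hw := w_mul_succ_mem_of_add_eq hι hy hlin (by omega) (a := 1) (D := D) (by omega)
      (by omega)
    have hz := sq_mem hι hy hlin (by omega) (c := D + 1) (by omega)
    convert add_mem (add_mem (Submodule.mem_sup_left h₇) hw) hz using 1
    ring
  | succ a =>
    exact w_mul_succ_mem_of_add_eq hι hy hlin (by omega) (D := D + 1) (by omega) (by omega)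

theorem mul_mem (hd : 6 ≤ d) {k l : ℕ} (hk : k < d) (hl : l < d) : y k * y l ∈ Q := by
  wlog hkl : k ≤ l generalizing k l with H
  · rw [mul_comm]
    exact H hl hk (by omega)
  rcases le_or_gt l (d - 3) with hl₃ | hl₃
  · exact mul_mem_of_le hι hy hlin hd (by omega) hl₃
  rw [mul_comm]
  obtain rfl | rfl : l = d - 2 ∨ l = d - 1 := by omega
  · obtain hk₃ | rfl : k ≤ d - 3 ∨ k = d - 2 := by omega
    · exact Submodule.mem_sup_right (v_mul_mem_complementSpan y (by omega) hk₃)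
    · exact Submodule.mem_sup_right (v_mul_v_mem_complementSpan y (by omega))
  · obtain hk₄ | rfl | rfl | rfl : k ≤ d - 4 ∨ k = d - 3 ∨ k = d - 2 ∨ k = d - 1 := by omega
    · exact w_mul_mem hι hy hlin hd hk₄
    · exact Submodule.mem_sup_right (w_mul_mem_complementSpan y (by omega))
    · rw [mul_comm]
      exact Submodule.mem_sup_right (v_mul_w_mem_complementSpan y (by omega))
    · exact Submodule.mem_sup_right (w_mul_w_mem_complementSpan y (by omega))

theorem ker_inf_homogeneousSubmodule_two_eq (hd : 6 ≤ d)
    (hspan : homogeneousSubmodule (Fin d) K 1 ≤ Submodule.span K (Set.range fun j : Fin d ↦ y j)) :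
    (RingHom.ker (aeval h : MvPolynomial (Fin d) K →ₐ[K] MvPolynomial (Fin 2) K)).restrictScalars K
      ⊓ homogeneousSubmodule (Fin d) K 2 = rankThreeSpan K h := by
  have hQ : homogeneousSubmodule (Fin d) K 2 ≤ Q := by
    rw [← homogeneousSubmodule_one_pow, pow_two]
    refine (mul_le_mul' hspan hspan).trans ?_
    rw [Submodule.span_mul_span, Submodule.span_le]
    rintro _ ⟨_, ⟨k, rfl⟩, _, ⟨l, rfl⟩, rfl⟩
    exact mul_mem hι hy hlin hd k.isLt l.isLt
  have hR : rankThreeSpan K h ≤ LinearMap.ker (aeval h).toLinearMap :=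
    Submodule.span_le.mpr fun q hq ↦ hq.1
  refine le_antisymm ?_ (le_inf hR (Submodule.span_le.mpr fun q hq ↦ hq.2.1))
  calc _ ≤ LinearMap.ker (aeval h).toLinearMap ⊓ Q := inf_le_inf_left _ hQ
    _ = rankThreeSpan K h := by
      rw [inf_comm, sup_inf_assoc_of_le _ hR,
        (disjoint_complementSpan_ker y (by omega) hy).eq_bot, sup_bot_eq]

end Quadrics

end

end ProjectedRNC

open ProjectedRNC in
theorem stmt14_general {K : Type*} [Field K] [IsAlgClosed K] [CharZero K]
    (d : ℕ) (hd : 6 ≤ d) (f : MvPolynomial (Fin 2) K)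
    (hann : ∀ G : MvPolynomial (Fin 2) K, apolar G f = 0 ↔
      G ∈ Ideal.span {X 0 ^ 3 - X 0 * X 1 ^ 2, (X 1 : MvPolynomial (Fin 2) K) ^ (d - 1)})
    (h : Fin d → MvPolynomial (Fin 2) K) (hind : LinearIndependent K h)
    (hspan : (Submodule.span K (Set.range h) : Set (MvPolynomial (Fin 2) K))
      = {G | G.IsHomogeneous d ∧ apolar G f = 0}) :
    (((RingHom.ker (aeval h : MvPolynomial (Fin d) K →ₐ[K] MvPolynomial (Fin 2) K)).restrictScalars K
        ⊓ homogeneousSubmodule (Fin d) K 2 : Submodule K (MvPolynomial (Fin d) K))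
      = Submodule.span K {q : MvPolynomial (Fin d) K |
          q ∈ RingHom.ker (aeval h : MvPolynomial (Fin d) K →ₐ[K] MvPolynomial (Fin 2) K)
          ∧ q.IsHomogeneous 2 ∧ rankLE 3 q})
    ∧ Ideal.span {q : MvPolynomial (Fin d) K |
        q ∈ RingHom.ker (aeval h : MvPolynomial (Fin d) K →ₐ[K] MvPolynomial (Fin 2) K)
        ∧ q.IsHomogeneous 2}
      = Ideal.span {q : MvPolynomial (Fin d) K |
          q ∈ Ideal.span {q' : MvPolynomial (Fin d) K |
            q' ∈ RingHom.ker (aeval h : MvPolynomial (Fin d) K →ₐ[K] MvPolynomial (Fin 2) K)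
            ∧ q'.IsHomogeneous 2}
          ∧ q.IsHomogeneous 2 ∧ rankLE 3 q} := by
  obtain ⟨ι, hι⟩ := IsAlgClosed.exists_pow_nat_eq (-1 : K) two_pos
  have hW (k : ℕ) : wBasis K d k ∈ Submodule.span K (Set.range h) := by
    rw [← SetLike.mem_coe, hspan]
    exact ⟨wBasis_isHomogeneous (by omega) k, (hann _).mpr (wBasis_mem_span_pair (by omega) k)⟩
  choose y hlin hy using fun k ↦ exists_mem_homogeneousSubmodule_one_aeval_eq (hW k)
  have hy' : (aeval h ∘ fun j : Fin d ↦ y j) = fun k : Fin d ↦ wBasis K d k := by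
    ext1 k
    exact hy k
  have hX :
      homogeneousSubmodule (Fin d) K 1 ≤ Submodule.span K (Set.range fun j : Fin d ↦ y j) := by
    refine homogeneousSubmodule_one_le_span hind (fun j ↦ hlin j) ?_
    rw [hy']
    exact span_le_span_wBasis (by omega) hind hW
  have hker := ker_inf_homogeneousSubmodule_two_eq hι (fun n _ ↦ hy n) hlin hd hX
  refine ⟨hker, Ideal.span_eq_span_of_subset_span_sep (R := K) fun q hq ↦ ?_⟩
  have hq' : q ∈ rankThreeSpan K h := hker ▸ Submodule.mem_inf.mpr ⟨hq.1, hq.2⟩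
  refine Submodule.span_mono ?_ hq'
  rintro r ⟨hr, hr₂, hr₃⟩
  exact ⟨⟨hr, hr₂⟩, hr₂, hr₃⟩

theorem stmt14 {K : Type*} [Field K] [IsAlgClosed K] [CharZero K]
    (d : ℕ) (hd : 6 ≤ d) (f : MvPolynomial (Fin 2) K) (hf : f ≠ 0) (hfd : f.IsHomogeneous d)
    (hann : ∀ G : MvPolynomial (Fin 2) K, apolar G f = 0 ↔
      G ∈ Ideal.span {X 0 ^ 3 - X 0 * X 1 ^ 2, (X 1 : MvPolynomial (Fin 2) K) ^ (d - 1)})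
    (h : Fin d → MvPolynomial (Fin 2) K) (hind : LinearIndependent K h)
    (hspan : (Submodule.span K (Set.range h) : Set (MvPolynomial (Fin 2) K))
      = {G | G.IsHomogeneous d ∧ apolar G f = 0}) :
    (((RingHom.ker (aeval h : MvPolynomial (Fin d) K →ₐ[K] MvPolynomial (Fin 2) K)).restrictScalars K
        ⊓ homogeneousSubmodule (Fin d) K 2 : Submodule K (MvPolynomial (Fin d) K))
      = Submodule.span K {q : MvPolynomial (Fin d) K |
          q ∈ RingHom.ker (aeval h : MvPolynomial (Fin d) K →ₐ[K] MvPolynomial (Fin 2) K)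
          ∧ q.IsHomogeneous 2 ∧ rankLE 3 q})
    ∧ Ideal.span {q : MvPolynomial (Fin d) K |
        q ∈ RingHom.ker (aeval h : MvPolynomial (Fin d) K →ₐ[K] MvPolynomial (Fin 2) K)
        ∧ q.IsHomogeneous 2}
      = Ideal.span {q : MvPolynomial (Fin d) K |
          q ∈ Ideal.span {q' : MvPolynomial (Fin d) K |
            q' ∈ RingHom.ker (aeval h : MvPolynomial (Fin d) K →ₐ[K] MvPolynomial (Fin 2) K)
            ∧ q'.IsHomogeneous 2}
          ∧ q.IsHomogeneous 2 ∧ rankLE 3 q} :=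
  stmt14_general d hd f hann h hind hspan
end
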